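/- Let t ≥ 2 and for i = 1, …, t let C_i = {im U_{i,l} : l = 1, …, N_i} be an (n_i, N_i, d_i, k)_q code with N_i ≥ 2, where U_{i,l} ∈ F_q^{k×n_i} are matrices of rank k with pairwise distinct rowspaces, and set U_{i,0} := 0_{k×n_i}. Define n := n_1 + ⋯ + n_t and the subspace code C := {im(U_{1,l_1} | U_{2,l_2} | ⋯ | U_{t,l_t}) : l_i ∈ {0, 1, …, N_i} for all i, (l_1, …, l_t) ≠ (0, …, 0)}, where (A_1 | ⋯ | A_t) denotes horizontal block concatenation. Then C is an (n, N, d, k)_q code with N = (∏_{i=1}^t (N_i + 1)) − 1 and d = min{d_1, …, d_t}. -/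

import Mathlib

/-- The rowspace `im U = {xU : x ∈ F^k}` of a matrix `U`. -/
noncomputable def rowSpace (F : Type) [Field F] {k : ℕ} {ι : Type} [Fintype ι]
    (M : Matrix (Fin k) ι F) : Submodule F (ι → F) :=
  LinearMap.range M.vecMulLinear

/-- The subspace distance `d_S(V,W) = dim V + dim W − 2 dim (V ∩ W)`. -/
noncomputable def sdist (F : Type) [Field F] {M : Type} [AddCommGroup M] [Module F M]
    (V W : Submodule F M) : ℕ :=
  Module.finrank F ↥V + Module.finrank F ↥W - 2 * Module.finrank F ↥(V ⊓ W)

/-- The subspace distance of a code: `d_S(C) = min {d_S(V,W) : V,W ∈ C, V ≠ W}`. -/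
noncomputable def cdist (F : Type) [Field F] {M : Type} [AddCommGroup M] [Module F M]
    (C : Set (Submodule F M)) : ℕ :=
  sInf {d : ℕ | ∃ V ∈ C, ∃ W ∈ C, V ≠ W ∧ d = sdist F V W}

/-- The horizontal block concatenation `(U_{1,l_1} | ⋯ | U_{t,l_t})`, where the choice
`l i = none` selects the zero matrix `U_{i,0} = 0` in block `i`.  Columns are indexed by
the sigma type `(i : Fin t) × Fin (n i)`, representing `Fin (n 1 + ⋯ + n t)`. -/
def linkMat {F : Type} [Field F] {k t : ℕ} {n N : Fin t → ℕ}
    (U : (i : Fin t) → Fin (N i) → Matrix (Fin k) (Fin (n i)) F)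
    (l : (i : Fin t) → Option (Fin (N i))) :
    Matrix (Fin k) ((i : Fin t) × Fin (n i)) F :=
  Matrix.of fun a p =>
    match l p.1 with
    | none => 0
    | some c => U p.1 c a p.2

section aux

variable {F : Type} [Field F] {k t : ℕ} {n N : Fin t → ℕ}
  (U : (i : Fin t) → Fin (N i) → Matrix (Fin k) (Fin (n i)) F)

def blockM (l : (i : Fin t) → Option (Fin (N i))) (i : Fin t) :
    Matrix (Fin k) (Fin (n i)) F :=
  (l i).elim 0 (U i)

lemma vecMul_linkMat_block (l : (i : Fin t) → Option (Fin (N i))) (i : Fin t)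
    (x : Fin k → F) :
    (fun p => Matrix.vecMul x (linkMat U l) ⟨i, p⟩) = Matrix.vecMul x (blockM U l i) := by
  funext p
  cases h : l i <;> simp [Matrix.vecMul, dotProduct, linkMat, blockM, h]

lemma funLeft_comp_vecMulLinear (l : (i : Fin t) → Option (Fin (N i))) (i : Fin t) :
    (LinearMap.funLeft F F (Sigma.mk i)).comp (linkMat U l).vecMulLinear
      = (blockM U l i).vecMulLinear := by
  apply LinearMap.ext
  intro x
  have := vecMul_linkMat_block U l i x
  simpa [Matrix.vecMulLinear, LinearMap.funLeft, Function.comp_def] using this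

lemma map_funLeft_rowSpace (l : (i : Fin t) → Option (Fin (N i))) (i : Fin t) :
    Submodule.map (LinearMap.funLeft F F (Sigma.mk i)) (rowSpace F (linkMat U l))
      = rowSpace F (blockM U l i) := by
  rw [rowSpace, ← LinearMap.range_comp, funLeft_comp_vecMulLinear, rowSpace]

lemma rowSpace_zero {ι : Type} [Fintype ι] :
    rowSpace F (ι := ι) (0 : Matrix (Fin k) ι F) = ⊥ := by
  rw [rowSpace, LinearMap.range_eq_bot]
  apply LinearMap.ext
  intro x
  simp [Matrix.vecMulLinear]

lemma vecMulLinear_injective_of_finrank {m : Type} [Fintype m]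
    (M : Matrix (Fin k) m F) (h : Module.finrank F ↥(rowSpace F M) = k) :
    Function.Injective M.vecMulLinear := by
  rw [← LinearMap.ker_eq_bot]
  have h2 := LinearMap.finrank_range_add_finrank_ker M.vecMulLinear
  rw [Module.finrank_fin_fun] at h2
  have h3 : Module.finrank F ↥(LinearMap.range M.vecMulLinear) = k := h
  have : Module.finrank F ↥(LinearMap.ker M.vecMulLinear) = 0 := by omega
  exact Submodule.finrank_eq_zero.mp this

lemma linkMat_injective {l : (i : Fin t) → Option (Fin (N i))} {i : Fin t}
    {c : Fin (N i)} (hc : l i = some c)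
    (hU : Function.Injective (U i c).vecMulLinear) :
    Function.Injective (linkMat U l).vecMulLinear := by
  intro x y hxy
  apply hU
  have hb : blockM U l i = U i c := by simp [blockM, hc]
  have h2 : (blockM U l i).vecMulLinear x = (blockM U l i).vecMulLinear y := by
    rw [← funLeft_comp_vecMulLinear]
    simp only [LinearMap.comp_apply, hxy]
  rwa [hb] at h2

lemma finrank_rowSpace_linkMat {l : (i : Fin t) → Option (Fin (N i))}
    (hinj : Function.Injective (linkMat U l).vecMulLinear) :
    Module.finrank F ↥(rowSpace F (linkMat U l)) = k := by
  rw [rowSpace, LinearMap.finrank_range_of_inj hinj, Module.finrank_fin_fun]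

lemma finrank_inf_le {M₁ M₂ : Type} [AddCommGroup M₁] [Module F M₁]
    [AddCommGroup M₂] [Module F M₂] [FiniteDimensional F M₂]
    (f : M₁ →ₗ[F] M₂) (V W : Submodule F M₁) (A B : Submodule F M₂)
    (h0 : ∀ v ∈ V, f v = 0 → v = 0)
    (hA : Submodule.map f V ≤ A) (hB : Submodule.map f W ≤ B) :
    Module.finrank F ↥(V ⊓ W) ≤ Module.finrank F ↥(A ⊓ B) := by
  let g : ↥(V ⊓ W) →ₗ[F] ↥(A ⊓ B) := LinearMap.codRestrict (A ⊓ B)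
    (f.comp (V ⊓ W).subtype)
    (fun v => ⟨hA ⟨v.1, v.2.1, rfl⟩, hB ⟨v.1, v.2.2, rfl⟩⟩)
  have hg : Function.Injective g := by
    intro a b hab
    have h1 : f a.1 = f b.1 := congrArg Subtype.val hab
    have h2 : a.1 - b.1 = 0 := h0 _ (V.sub_mem a.2.1 b.2.1) (by rw [map_sub, h1, sub_self])
    exact Subtype.ext (sub_eq_zero.mp h2)
  exact LinearMap.finrank_le_finrank_of_injective hg

lemma sdist_comm {M : Type} [AddCommGroup M] [Module F M] (V W : Submodule F M) :
    sdist F V W = sdist F W V := by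
  rw [sdist, sdist, add_comm, inf_comm]

end aux

/-- For `i = 1,…,t` (`t ≥ 2`) let `C_i = {im U_{i,l} : l ∈ [N_i]}` be an
`(n_i, N_i, d_i, k)_q` code, `U_{i,0} := 0`.  Then the linkage code
`C = {im(U_{1,l_1} | ⋯ | U_{t,l_t}) : l_i ∈ {0,…,N_i}, (l_1,…,l_t) ≠ 0}` is an
`(n_1+⋯+n_t, N, d, k)_q` code with `N = ∏(N_i + 1) − 1` and `d = min{d_1,…,d_t}`. -/
theorem stmt15 (q k t : ℕ) (ht : 2 ≤ t) (F : Type) [Field F] [Finite F]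
    (hq : Nat.card F = q) (n N d : Fin t → ℕ) (hN : ∀ i, 2 ≤ N i)
    (U : (i : Fin t) → Fin (N i) → Matrix (Fin k) (Fin (n i)) F)
    (hrk : ∀ i l, Module.finrank F ↥(rowSpace F (U i l)) = k)
    (hinj : ∀ i, Function.Injective fun l => rowSpace F (U i l))
    (hd : ∀ i, cdist F {W | ∃ l, W = rowSpace F (U i l)} = d i)
    (C : Set (Submodule F (((i : Fin t) × Fin (n i)) → F)))
    (hC : C = {W | ∃ l : (i : Fin t) → Option (Fin (N i)),
      l ≠ (fun _ => none) ∧ W = rowSpace F (linkMat U l)}) :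
    (∀ W ∈ C, Module.finrank F ↥W = k) ∧
    Nat.card C = (∏ i : Fin t, (N i + 1)) - 1 ∧
    cdist F C = sInf {d' : ℕ | ∃ i : Fin t, d' = d i} := by
  classical
  subst hC
  have hUinj : ∀ i c, Function.Injective (U i c).vecMulLinear :=
    fun i c => vecMulLinear_injective_of_finrank _ (hrk i c)
  -- k ≥ 1
  have hk1 : 1 ≤ k := by
    by_contra hk
    have hk0 : k = 0 := by omega
    have i0 : Fin t := ⟨0, by omega⟩
    have hbot : ∀ c : Fin (N i0), rowSpace F (U i0 c) = ⊥ := by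
      intro c
      have h := hrk i0 c
      have h0 : Module.finrank F ↥(rowSpace F (U i0 c)) = 0 := by omega
      exact Submodule.finrank_eq_zero.mp h0
    have h01 : (⟨0, by have := hN i0; omega⟩ : Fin (N i0)) ≠ ⟨1, by have := hN i0; omega⟩ := by
      simp
    exact h01 (hinj i0 (by simp only [hbot]))
  -- part 1
  have part1 : ∀ W ∈ {W | ∃ l : (i : Fin t) → Option (Fin (N i)),
      l ≠ (fun _ => none) ∧ W = rowSpace F (linkMat U l)}, Module.finrank F ↥W = k := by
    rintro W ⟨l, hl, rfl⟩
    obtain ⟨i, c, hc⟩ : ∃ i c, l i = some c := by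
      by_contra h
      push_neg at h
      apply hl
      funext i
      cases h' : l i with
      | none => rfl
      | some c => exact absurd h' (h i c)
    exact finrank_rowSpace_linkMat U (linkMat_injective U hc (hUinj i c))
  -- block facts
  have hblock_some : ∀ (l : (i : Fin t) → Option (Fin (N i))) i c, l i = some c →
      blockM U l i = U i c := by
    intro l i c h; simp [blockM, h]
  have hblock_none : ∀ (l : (i : Fin t) → Option (Fin (N i))) i, l i = none →
      rowSpace F (blockM U l i) = ⊥ := by
    intro l i h
    rw [show blockM U l i = 0 by simp [blockM, h], rowSpace_zero]
  have hrs_ne_bot : ∀ i c, rowSpace F (U i c) ≠ ⊥ := by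
    intro i c h
    have := hrk i c
    rw [h, finrank_bot] at this
    omega
  -- injectivity of the linkage map
  have hfinj : Function.Injective (fun l : (i : Fin t) → Option (Fin (N i)) =>
      rowSpace F (linkMat U l)) := by
    intro l l' h
    simp only at h
    funext i
    have hmap : rowSpace F (blockM U l i) = rowSpace F (blockM U l' i) := by
      rw [← map_funLeft_rowSpace, ← map_funLeft_rowSpace, h]
    cases hli : l i with
    | none =>
      cases hli' : l' i with
      | none => rfl
      | some c' =>
        exfalso
        rw [hblock_none l i hli, hblock_some l' i c' hli'] at hmap
        exact hrs_ne_bot i c' hmap.symm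
    | some c =>
      cases hli' : l' i with
      | none =>
        exfalso
        rw [hblock_none l' i hli', hblock_some l i c hli] at hmap
        exact hrs_ne_bot i c hmap
      | some c' =>
        rw [hblock_some l i c hli, hblock_some l' i c' hli'] at hmap
        rw [hinj i hmap]
  -- part 2
  have part2 : Nat.card {W | ∃ l : (i : Fin t) → Option (Fin (N i)),
      l ≠ (fun _ => none) ∧ W = rowSpace F (linkMat U l)} = (∏ i : Fin t, (N i + 1)) - 1 := by
    have himg : {W | ∃ l : (i : Fin t) → Option (Fin (N i)),
        l ≠ (fun _ => none) ∧ W = rowSpace F (linkMat U l)}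
        = (fun l => rowSpace F (linkMat U l)) '' {l | l ≠ fun _ => none} := by
      ext W
      constructor
      · rintro ⟨l, h1, h2⟩; exact ⟨l, h1, h2.symm⟩
      · rintro ⟨l, h1, h2⟩; exact ⟨l, h1, h2.symm⟩
    rw [himg, Nat.card_coe_set_eq, Set.ncard_image_of_injective _ hfinj,
      ← Nat.card_coe_set_eq]
    have : Nat.card ↥{l : (i : Fin t) → Option (Fin (N i)) | l ≠ fun _ => none}
        = Fintype.card {l : (i : Fin t) → Option (Fin (N i)) // ¬ (l = fun _ => none)} :=
      Nat.card_eq_fintype_card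
    rw [this, Fintype.card_subtype_compl, Fintype.card_subtype_eq]
    simp [Fintype.card_option]
  refine ⟨part1, part2, ?_⟩
  set Dset := {d' : ℕ | ∃ i : Fin t, d' = d i} with hDsetdef
  have hDne : Dset.Nonempty := ⟨d ⟨0, by omega⟩, ⟨⟨0, by omega⟩, rfl⟩⟩
  have hD0le : ∀ i, sInf Dset ≤ d i := fun i => Nat.sInf_le ⟨i, rfl⟩
  -- block code distance facts
  have hd_le_sdist : ∀ (i : Fin t) (c c' : Fin (N i)),
      rowSpace F (U i c) ≠ rowSpace F (U i c') →
      d i ≤ sdist F (rowSpace F (U i c)) (rowSpace F (U i c')) := by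
    intro i c c' hne
    rw [← hd i]
    simp only [cdist]
    exact Nat.sInf_le ⟨rowSpace F (U i c), ⟨c, rfl⟩, rowSpace F (U i c'), ⟨c', rfl⟩, hne, rfl⟩
  have hSine : ∀ i : Fin t, {dd : ℕ | ∃ V ∈ {W | ∃ l, W = rowSpace F (U i l)},
      ∃ W ∈ {W | ∃ l, W = rowSpace F (U i l)}, V ≠ W ∧ dd = sdist F V W}.Nonempty := by
    intro i
    have h2 := hN i
    have hne01 : rowSpace F (U i ⟨0, by omega⟩) ≠ rowSpace F (U i ⟨1, by omega⟩) := by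
      intro h
      have := hinj i h
      simp [Fin.mk.injEq] at this
    exact ⟨_, _, ⟨⟨0, by omega⟩, rfl⟩, _, ⟨⟨1, by omega⟩, rfl⟩, hne01, rfl⟩
  have hd_le_2k : ∀ i : Fin t, d i ≤ k + k := by
    intro i
    rw [← hd i]
    simp only [cdist]
    obtain ⟨V0, ⟨cV, rfl⟩, W0, ⟨cW, rfl⟩, hVW, hval⟩ := Nat.sInf_mem (hSine i)
    rw [hval, sdist, hrk i cV, hrk i cW]
    omega
  -- kernel fact for projections
  have hker : ∀ (l : (i : Fin t) → Option (Fin (N i))) (i : Fin t) (c : Fin (N i)),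
      l i = some c → ∀ v ∈ rowSpace F (linkMat U l),
      LinearMap.funLeft F F (Sigma.mk i) v = 0 → v = 0 := by
    rintro l i c hc v ⟨x, rfl⟩ hv0
    have h1 : (blockM U l i).vecMulLinear x = 0 := by
      rw [← funLeft_comp_vecMulLinear]
      exact hv0
    rw [hblock_some l i c hc] at h1
    have hx : x = 0 := hUinj i c (by rw [h1]; simp)
    rw [hx]
    simp
  -- key lower-bound lemma
  have key : ∀ (l l' : (i : Fin t) → Option (Fin (N i))) (i : Fin t) (c : Fin (N i)),
      l i = some c → l i ≠ l' i →
      Module.finrank F ↥(rowSpace F (linkMat U l')) = k →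
      sInf Dset ≤ sdist F (rowSpace F (linkMat U l)) (rowSpace F (linkMat U l')) := by
    intro l l' i c hc hne hV'
    have hV : Module.finrank F ↥(rowSpace F (linkMat U l)) = k :=
      finrank_rowSpace_linkMat U (linkMat_injective U hc (hUinj i c))
    have hfle : Module.finrank F ↥(rowSpace F (linkMat U l) ⊓ rowSpace F (linkMat U l'))
        ≤ Module.finrank F ↥(rowSpace F (blockM U l i) ⊓ rowSpace F (blockM U l' i)) :=
      finrank_inf_le (LinearMap.funLeft F F (Sigma.mk i)) _ _ _ _ (hker l i c hc)
        (le_of_eq (map_funLeft_rowSpace U l i)) (le_of_eq (map_funLeft_rowSpace U l' i))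
    cases hc' : l' i with
    | none =>
      have hinf : rowSpace F (blockM U l i) ⊓ rowSpace F (blockM U l' i) = ⊥ := by
        rw [hblock_none l' i hc', inf_bot_eq]
      rw [hinf, finrank_bot] at hfle
      have hfr0 : Module.finrank F
          ↥(rowSpace F (linkMat U l) ⊓ rowSpace F (linkMat U l')) = 0 := by omega
      have heq : sdist F (rowSpace F (linkMat U l)) (rowSpace F (linkMat U l')) = k + k := by
        rw [sdist, hV, hV', hfr0]
        omega
      rw [heq]
      exact le_trans (hD0le i) (hd_le_2k i)
    | some c' =>
      have hcc' : rowSpace F (U i c) ≠ rowSpace F (U i c') := by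
        intro h
        have h2 := hinj i h
        apply hne
        rw [hc, hc', h2]
      rw [hblock_some l i c hc, hblock_some l' i c' hc'] at hfle
      have h1 := hd_le_sdist i c c' hcc'
      have h2 : sdist F (rowSpace F (U i c)) (rowSpace F (U i c'))
          ≤ sdist F (rowSpace F (linkMat U l)) (rowSpace F (linkMat U l')) := by
        rw [sdist, sdist, hV, hV', hrk i c, hrk i c']
        omega
      exact le_trans (hD0le i) (le_trans h1 h2)
  -- attained pair
  obtain ⟨i0, hi0⟩ := Nat.sInf_mem hDne
  obtain ⟨V0, ⟨c, rfl⟩, W0, ⟨c', rfl⟩, hne0, hval⟩ := Nat.sInf_mem (hSine i0)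
  have hdi0 : d i0 = sdist F (rowSpace F (U i0 c)) (rowSpace F (U i0 c')) := by
    rw [← hd i0]
    simp only [cdist]
    exact hval
  set L := Function.update (fun j : Fin t => (none : Option (Fin (N j)))) i0 (some c) with hLdef
  set L' := Function.update (fun j : Fin t => (none : Option (Fin (N j)))) i0 (some c') with hL'def
  have hL : L i0 = some c := Function.update_self _ _ _
  have hL' : L' i0 = some c' := Function.update_self _ _ _
  have hLj : ∀ j, j ≠ i0 → L j = none := fun j hj => Function.update_of_ne hj _ _
  have hL'j : ∀ j, j ≠ i0 → L' j = none := fun j hj => Function.update_of_ne hj _ _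
  have hLne : L ≠ fun _ => none := by
    intro h
    have := congrFun h i0
    rw [hL] at this
    cases this
  have hL'ne : L' ≠ fun _ => none := by
    intro h
    have := congrFun h i0
    rw [hL'] at this
    cases this
  have hmemL : rowSpace F (linkMat U L) ∈ {W | ∃ l : (i : Fin t) → Option (Fin (N i)),
      l ≠ (fun _ => none) ∧ W = rowSpace F (linkMat U l)} := ⟨L, hLne, rfl⟩
  have hmemL' : rowSpace F (linkMat U L') ∈ {W | ∃ l : (i : Fin t) → Option (Fin (N i)),
      l ≠ (fun _ => none) ∧ W = rowSpace F (linkMat U l)} := ⟨L', hL'ne, rfl⟩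
  have hVLne : rowSpace F (linkMat U L) ≠ rowSpace F (linkMat U L') := by
    intro h
    have hLL := hfinj h
    have h2 := congrFun hLL i0
    rw [hL, hL'] at h2
    apply hne0
    rw [Option.some.injEq] at h2
    rw [h2]
  have hVL : Module.finrank F ↥(rowSpace F (linkMat U L)) = k :=
    finrank_rowSpace_linkMat U (linkMat_injective U hL (hUinj i0 c))
  have hVL' : Module.finrank F ↥(rowSpace F (linkMat U L')) = k :=
    finrank_rowSpace_linkMat U (linkMat_injective U hL' (hUinj i0 c'))
  -- finrank of intersection: ≤
  have hle1 : Module.finrank F ↥(rowSpace F (linkMat U L) ⊓ rowSpace F (linkMat U L'))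
      ≤ Module.finrank F ↥(rowSpace F (U i0 c) ⊓ rowSpace F (U i0 c')) :=
    finrank_inf_le (LinearMap.funLeft F F (Sigma.mk i0)) _ _ _ _ (hker L i0 c hL)
      (le_of_eq (by rw [map_funLeft_rowSpace, hblock_some L i0 c hL]))
      (le_of_eq (by rw [map_funLeft_rowSpace, hblock_some L' i0 c' hL']))
  -- compatibility for reverse direction
  have hcompat : ∀ x y : Fin k → F,
      (U i0 c).vecMulLinear x = (U i0 c').vecMulLinear y →
      (linkMat U L).vecMulLinear x = (linkMat U L').vecMulLinear y := by
    intro x y hxy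
    simp only [Matrix.vecMulLinear_apply] at hxy ⊢
    funext p
    obtain ⟨j, pp⟩ := p
    have h1 : Matrix.vecMul x (linkMat U L) ⟨j, pp⟩ = Matrix.vecMul x (blockM U L j) pp :=
      congrFun (vecMul_linkMat_block U L j x) pp
    have h2 : Matrix.vecMul y (linkMat U L') ⟨j, pp⟩ = Matrix.vecMul y (blockM U L' j) pp :=
      congrFun (vecMul_linkMat_block U L' j y) pp
    rw [h1, h2]
    by_cases hj : j = i0
    · subst hj
      rw [hblock_some L j c hL, hblock_some L' j c' hL', hxy]
    · rw [show blockM U L j = 0 by simp [blockM, hLj j hj],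
        show blockM U L' j = 0 by simp [blockM, hL'j j hj]]
      simp
  -- finrank of intersection: ≥
  have hge : Module.finrank F ↥(rowSpace F (U i0 c) ⊓ rowSpace F (U i0 c'))
      ≤ Module.finrank F ↥(rowSpace F (linkMat U L) ⊓ rowSpace F (linkMat U L')) := by
    set eA := LinearEquiv.ofInjective (U i0 c).vecMulLinear (hUinj i0 c) with heA
    set emb : ↥(rowSpace F (U i0 c) ⊓ rowSpace F (U i0 c')) →ₗ[F]
        (((i : Fin t) × Fin (n i)) → F) :=
      (linkMat U L).vecMulLinear ∘ₗ (eA.symm.toLinearMap) ∘ₗ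
        (Submodule.inclusion inf_le_left) with hemb
    have hembval : ∀ w : ↥(rowSpace F (U i0 c) ⊓ rowSpace F (U i0 c')),
        (U i0 c).vecMulLinear (eA.symm (Submodule.inclusion inf_le_left w))
          = (w : Fin (n i0) → F) := by
      intro w
      have h3 := congrArg Subtype.val (eA.apply_symm_apply (Submodule.inclusion inf_le_left w))
      simp only [heA, LinearEquiv.ofInjective_apply] at h3 ⊢
      exact h3
    have hmem' : ∀ w, emb w ∈ rowSpace F (linkMat U L) ⊓ rowSpace F (linkMat U L') := by
      intro w
      constructor
      · exact ⟨eA.symm (Submodule.inclusion inf_le_left w), rfl⟩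
      · obtain ⟨y, hy⟩ := (Submodule.mem_inf.mp w.2).2
        refine ⟨y, ?_⟩
        have h4 : (U i0 c).vecMulLinear (eA.symm (Submodule.inclusion inf_le_left w))
            = (U i0 c').vecMulLinear y := by
          rw [hembval w, hy]
        exact (hcompat _ y h4).symm
    have hinjemb : Function.Injective emb := by
      rw [hemb]
      simp only [LinearMap.coe_comp, LinearEquiv.coe_coe]
      exact Function.Injective.comp (linkMat_injective U hL (hUinj i0 c))
        (Function.Injective.comp eA.symm.injective (Submodule.inclusion_injective _))
    have hinjg : Function.Injective (LinearMap.codRestrict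
        (rowSpace F (linkMat U L) ⊓ rowSpace F (linkMat U L')) emb hmem') := by
      intro a b hab
      exact hinjemb (congrArg Subtype.val hab)
    exact LinearMap.finrank_le_finrank_of_injective hinjg
  have hfr_eq : Module.finrank F ↥(rowSpace F (linkMat U L) ⊓ rowSpace F (linkMat U L'))
      = Module.finrank F ↥(rowSpace F (U i0 c) ⊓ rowSpace F (U i0 c')) :=
    le_antisymm hle1 hge
  have hsd : sdist F (rowSpace F (linkMat U L)) (rowSpace F (linkMat U L')) = d i0 := by
    rw [sdist, hVL, hVL', hfr_eq, hdi0, sdist, hrk i0 c, hrk i0 c']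
  -- conclude
  apply le_antisymm
  · rw [hi0]
    simp only [cdist]
    exact Nat.sInf_le ⟨_, hmemL, _, hmemL', hVLne, hsd.symm⟩
  · simp only [cdist]
    apply le_csInf
    · exact ⟨d i0, _, hmemL, _, hmemL', hVLne, hsd.symm⟩
    · rintro b ⟨V, ⟨l, hl, rfl⟩, W, ⟨l', hl', rfl⟩, hVW, rfl⟩
      have hll' : l ≠ l' := fun h => hVW (by rw [h])
      obtain ⟨i, hi⟩ := Function.ne_iff.mp hll'
      cases h1 : l i with
      | some cc => exact key l l' i cc h1 hi (part1 _ ⟨l', hl', rfl⟩)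
      | none =>
        cases h2 : l' i with
        | none => exact absurd (h1.trans h2.symm) hi
        | some cc =>
          rw [sdist_comm]
          exact key l' l i cc h2 (Ne.symm hi) (part1 _ ⟨l, hl, rfl⟩)
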